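/- arXiv:2106.03328 — 3 statements merged into one kernel-verified Lean document; each statement's English description precedes it below -/
import Mathlib

section
/- Let μ > 0, B ≥ 0, and γ ≥ 2 be real numbers, and define the step sizes η_t = 2/(μ(γ + t)) for t = 0, 1, 2, …. Let (Δ_t)_{t≥0} be a sequence of nonnegative reals satisfying Δ_{t+1} ≤ (1 − μ η_t) Δ_t + B η_t² for all t ≥ 0. Then for all t ≥ 0, Δ_t ≤ (1/(γ + t − 1)) (4B/μ² + γ Δ_0). -/
/-- The induction step (Equation (18)) of the convergence analysis of Theorem 2: a
nonnegative sequence satisfying the decaying-step-size contraction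
`Δ_{t+1} ≤ (1 - μ η_t) Δ_t + B η_t²` with `η_t = 2/(μ(γ+t))`, `μ > 0`, `B ≥ 0`, `γ ≥ 2`,
obeys the `O(1/t)` bound `Δ_t ≤ (4B/μ² + γ Δ_0)/(γ + t - 1)`. -/
theorem stepsize_recursion_bound (μ B γ : ℝ) (hμ : 0 < μ) (hB : 0 ≤ B) (hγ : 2 ≤ γ)
    (η : ℕ → ℝ) (hη : ∀ t : ℕ, η t = 2 / (μ * (γ + t)))
    (Δ : ℕ → ℝ) (hΔ : ∀ t, 0 ≤ Δ t)
    (hrec : ∀ t : ℕ, Δ (t + 1) ≤ (1 - μ * η t) * Δ t + B * η t ^ 2) :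
    ∀ t : ℕ, Δ t ≤ (1 / (γ + t - 1)) * (4 * B / μ ^ 2 + γ * Δ 0) := by
  have hμ' : μ ≠ 0 := ne_of_gt hμ
  have hD : 0 ≤ 4 * B / μ ^ 2 := by positivity
  intro t
  induction t with
  | zero =>
      have h1 : (0:ℝ) < γ - 1 := by linarith
      push_cast
      rw [one_div, ← div_eq_inv_mul, le_div_iff₀ (by linarith : (0:ℝ) < γ + 0 - 1)]
      nlinarith [hΔ 0]
  | succ t ih =>
      have ht : (0:ℝ) ≤ (t : ℝ) := Nat.cast_nonneg t
      have hs : (0:ℝ) < γ + t := by linarith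
      have hs1 : (0:ℝ) < γ + t - 1 := by linarith
      have hηt : η t = 2 / (μ * (γ + t)) := hη t
      have hfac : 1 - μ * η t = 1 - 2 / (γ + t) := by
        rw [hηt]; field_simp
      have hfac0 : 0 ≤ 1 - μ * η t := by
        rw [hfac, sub_nonneg, div_le_one hs]; linarith
      have key := hrec t
      have step : Δ (t + 1) ≤ (1 - μ * η t) * ((1 / (γ + t - 1)) * (4 * B / μ ^ 2 + γ * Δ 0))
          + B * η t ^ 2 :=
        le_trans key (by nlinarith [mul_le_mul_of_nonneg_left ih hfac0])
      have goal' : (1 - μ * η t) * ((1 / (γ + t - 1)) * (4 * B / μ ^ 2 + γ * Δ 0))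
          + B * η t ^ 2 ≤ (1 / (γ + (t+1:ℕ) - 1)) * (4 * B / μ ^ 2 + γ * Δ 0) := by
        push_cast
        rw [hfac, hηt]
        have hC0 : 0 ≤ γ * Δ 0 := by nlinarith [hΔ 0]
        have h1 : (γ + (t:ℝ)) ≠ 0 := ne_of_gt hs
        have h2 : (γ + (t:ℝ) - 1) ≠ 0 := ne_of_gt hs1
        have h3 : γ + ((t:ℝ) + 1) - 1 = γ + t := by ring
        rw [h3]
        rw [← sub_nonneg]
        have hexp : 1 / (γ + (t:ℝ)) * (4 * B / μ ^ 2 + γ * Δ 0)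
            - ((1 - 2 / (γ + (t:ℝ))) * (1 / (γ + (t:ℝ) - 1) * (4 * B / μ ^ 2 + γ * Δ 0))
              + B * (2 / (μ * (γ + (t:ℝ)))) ^ 2)
            = (γ * Δ 0 * (γ + (t:ℝ)) + 4 * B / μ ^ 2) / ((γ + (t:ℝ)) ^ 2 * (γ + (t:ℝ) - 1)) := by
          field_simp
          ring
        rw [hexp]
        have hnum : 0 ≤ γ * Δ 0 * (γ + (t:ℝ)) + 4 * B / μ ^ 2 := by positivity
        positivity
      exact le_trans step goal'
end

section
/- Let N, K, T be positive integers with T dividing N, T dividing K, and K ≤ N/2. Let 𝒮_1, …, 𝒮_R be pairwise distinct subsets of {1,…,N}, each of size exactly K, and let V ∈ {0,1}^{R×N} be the matrix whose r-th row is the indicator vector of 𝒮_r. If V satisfies the multi-round privacy guarantee T, then R ≤ C(N/T, K/T), where C(·,·) denotes the binomial coefficient. -/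
open Matrix Finset


lemma sum_two_pow_lt : ∀ (n : ℕ) (A : Finset ℕ), A ⊆ Finset.range n →
    ∑ a ∈ A, 2 ^ a < 2 ^ n := by
  intro n
  induction n with
  | zero => intro A hA; simp_all [Finset.subset_empty.mp]
  | succ n ih =>
    intro A hA
    have h1 : A.erase n ⊆ Finset.range n := by
      intro x hx
      have h2 := hA (Finset.mem_of_mem_erase hx)
      have h3 := Finset.ne_of_mem_erase hx
      simp only [Finset.mem_range] at h2 ⊢; omega
    have h2 := ih _ h1
    by_cases hn : n ∈ A
    · have h3 : ∑ a ∈ A, 2 ^ a = 2 ^ n + ∑ a ∈ A.erase n, 2 ^ a :=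
        (Finset.add_sum_erase _ _ hn).symm
      rw [h3, pow_succ]; omega
    · rw [Finset.erase_eq_of_notMem hn] at h2
      have : (2:ℕ)^n ≤ 2^(n+1) := Nat.pow_le_pow_right (by norm_num) (by omega)
      omega

lemma sum_two_pow_inj : ∀ (n : ℕ) (A B : Finset ℕ), A ⊆ Finset.range n → B ⊆ Finset.range n →
    (∑ a ∈ A, 2 ^ a) = ∑ b ∈ B, 2 ^ b → A = B := by
  intro n
  induction n with
  | zero => intro A B hA hB _
            rw [Finset.range_zero, Finset.subset_empty] at hA hB; rw [hA, hB]
  | succ n ih =>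
    intro A B hA hB h
    have hA' : A.erase n ⊆ Finset.range n := by
      intro x hx
      have h2 := hA (Finset.mem_of_mem_erase hx)
      have h3 := Finset.ne_of_mem_erase hx
      simp only [Finset.mem_range] at h2 ⊢; omega
    have hB' : B.erase n ⊆ Finset.range n := by
      intro x hx
      have h2 := hB (Finset.mem_of_mem_erase hx)
      have h3 := Finset.ne_of_mem_erase hx
      simp only [Finset.mem_range] at h2 ⊢; omega
    have hlA := sum_two_pow_lt n _ hA'
    have hlB := sum_two_pow_lt n _ hB'
    by_cases hnA : n ∈ A <;> by_cases hnB : n ∈ B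
    · have e1 : ∑ a ∈ A, 2 ^ a = 2 ^ n + ∑ a ∈ A.erase n, 2 ^ a :=
        (Finset.add_sum_erase _ _ hnA).symm
      have e2 : ∑ a ∈ B, 2 ^ a = 2 ^ n + ∑ a ∈ B.erase n, 2 ^ a :=
        (Finset.add_sum_erase _ _ hnB).symm
      have : A.erase n = B.erase n := ih _ _ hA' hB' (by omega)
      have h4 : insert n (A.erase n) = insert n (B.erase n) := by rw [this]
      rwa [Finset.insert_erase hnA, Finset.insert_erase hnB] at h4
    · exfalso
      have e1 : ∑ a ∈ A, 2 ^ a = 2 ^ n + ∑ a ∈ A.erase n, 2 ^ a :=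
        (Finset.add_sum_erase _ _ hnA).symm
      rw [Finset.erase_eq_of_notMem hnB] at hlB
      omega
    · exfalso
      have e2 : ∑ a ∈ B, 2 ^ a = 2 ^ n + ∑ a ∈ B.erase n, 2 ^ a :=
        (Finset.add_sum_erase _ _ hnB).symm
      rw [Finset.erase_eq_of_notMem hnA] at hlA
      omega
    · have eA := Finset.erase_eq_of_notMem hnA
      have eB := Finset.erase_eq_of_notMem hnB
      have := ih _ _ hA' hB' (by rw [eA, eB] at *; omega)
      rwa [eA, eB] at this

lemma sum_two_pow_inj_real {R : ℕ} (A B : Finset (Fin R))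
    (h : ∑ r ∈ A, (2:ℝ) ^ (r : ℕ) = ∑ r ∈ B, (2:ℝ) ^ (r : ℕ)) : A = B := by
  have hcast : ∀ C : Finset (Fin R),
      ∑ r ∈ C, (2:ℝ) ^ (r : ℕ) = ((∑ a ∈ C.image Fin.val, 2 ^ a : ℕ) : ℝ) := by
    intro C
    rw [Finset.sum_image (by intro x _ y _ hxy; exact Fin.val_injective hxy)]
    push_cast; ring_nf
  rw [hcast A, hcast B] at h
  have h2 : (∑ a ∈ A.image Fin.val, 2 ^ a) = ∑ a ∈ B.image Fin.val, 2 ^ a :=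
    Nat.cast_injective h
  have himg : A.image Fin.val = B.image Fin.val := by
    apply sum_two_pow_inj R _ _ ?_ ?_ h2 <;>
    · intro x hx
      simp only [Finset.mem_image] at hx
      obtain ⟨r, _, rfl⟩ := hx
      exact Finset.mem_range.mpr r.isLt
  ext r
  constructor <;> intro hr
  · have : (r : ℕ) ∈ B.image Fin.val := himg ▸ Finset.mem_image_of_mem _ hr
    simp only [Finset.mem_image] at this
    obtain ⟨r', hr', he⟩ := this
    rwa [← Fin.val_injective he]
  · have : (r : ℕ) ∈ A.image Fin.val := himg ▸ Finset.mem_image_of_mem _ hr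
    simp only [Finset.mem_image] at this
    obtain ⟨r', hr', he⟩ := this
    rwa [← Fin.val_injective he]

lemma counting_lemma {α : Type*} [DecidableEq α] (T N K : ℕ) (hT : 0 < T)
    (hTN : T ∣ N) (hTK : T ∣ K)
    (ι : Finset α) (s : α → ℕ)
    (hs : ∀ p ∈ ι, T ≤ s p) (hssum : ∑ p ∈ ι, s p ≤ N)
    (𝔽 : Finset (Finset α))
    (h𝔽 : ∀ F ∈ 𝔽, F ⊆ ι ∧ ∑ p ∈ F, s p = K) :
    𝔽.card ≤ (N / T).choose (K / T) := by
  classical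
  obtain ⟨n', rfl⟩ := hTN
  obtain ⟨k', rfl⟩ := hTK
  have hNd : T * n' / T = n' := Nat.mul_div_cancel_left _ hT
  have hKd : T * k' / T = k' := Nat.mul_div_cancel_left _ hT
  rw [hNd, hKd]
  set e := ι.equivFin with he
  set idx : α → ℕ := fun x => if h : x ∈ ι then (e ⟨x, h⟩ : ℕ) else 0 with hidx
  have idx_inj : ∀ x ∈ ι, ∀ y ∈ ι, idx x = idx y → x = y := by
    intro x hx y hy hxy
    simp only [hidx, dif_pos hx, dif_pos hy] at hxy
    have : e ⟨x, hx⟩ = e ⟨y, hy⟩ := Fin.val_injective hxy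
    have := e.injective this
    exact congrArg Subtype.val this
  set c : α → ℕ := fun x => s x / T with hc
  have hc1 : ∀ x ∈ ι, 1 ≤ c x := by
    intro x hx
    exact (Nat.one_le_div_iff hT).mpr (hs x hx)
  set pref : α → ℕ := fun x => ∑ y ∈ ι.filter (fun y => idx y < idx x), c y with hpref
  set ctot : ℕ := ∑ y ∈ ι, c y with hctot
  have hpref_le : ∀ x ∈ ι, pref x + c x ≤ ctot := by
    intro x hx
    have hsub : insert x (ι.filter (fun y => idx y < idx x)) ⊆ ι := by
      intro y hy
      rcases Finset.mem_insert.mp hy with rfl | hy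
      · exact hx
      · exact (Finset.mem_filter.mp hy).1
    have hnx : x ∉ ι.filter (fun y => idx y < idx x) := by
      simp [Finset.mem_filter]
    calc pref x + c x = ∑ y ∈ insert x (ι.filter (fun y => idx y < idx x)), c y := by
          rw [Finset.sum_insert hnx]; ring
      _ ≤ ctot := Finset.sum_le_sum_of_subset hsub
  have hpref_mono : ∀ x ∈ ι, ∀ y ∈ ι, idx x < idx y → pref x + c x ≤ pref y := by
    intro x hx y hy hlt
    have hsub : insert x (ι.filter (fun z => idx z < idx x)) ⊆
        ι.filter (fun z => idx z < idx y) := by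
      intro z hz
      rcases Finset.mem_insert.mp hz with rfl | hz
      · exact Finset.mem_filter.mpr ⟨hx, hlt⟩
      · have := Finset.mem_filter.mp hz
        exact Finset.mem_filter.mpr ⟨this.1, lt_trans this.2 hlt⟩
    have hnx : x ∉ ι.filter (fun z => idx z < idx x) := by
      simp [Finset.mem_filter]
    calc pref x + c x = ∑ z ∈ insert x (ι.filter (fun z => idx z < idx x)), c z := by
          rw [Finset.sum_insert hnx]; ring
      _ ≤ pref y := Finset.sum_le_sum_of_subset hsub
  set B : α → Finset ℕ := fun x => Finset.Ico (pref x) (pref x + c x) with hB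
  set Φ : Finset α → Finset ℕ :=
    fun F => F.biUnion B ∪ Finset.Ico ctot (ctot + (k' - ∑ x ∈ F, c x)) with hΦ
  -- per-F facts
  have hcF : ∀ F ∈ 𝔽, ∑ x ∈ F, c x ≤ k' := by
    intro F hF
    obtain ⟨hFsub, hFsum⟩ := h𝔽 F hF
    have : (∑ x ∈ F, c x) * T ≤ T * k' := by
      rw [Finset.sum_mul]
      calc ∑ x ∈ F, c x * T ≤ ∑ x ∈ F, s x := by
            apply Finset.sum_le_sum
            intro x _
            exact Nat.div_mul_le_self _ _
        _ = T * k' := hFsum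
    rw [mul_comm] at this
    exact Nat.le_of_mul_le_mul_left this hT
  have hrest : ∀ F ∈ 𝔽, ∑ x ∈ ι \ F, c x + k' ≤ n' := by
    intro F hF
    obtain ⟨hFsub, hFsum⟩ := h𝔽 F hF
    have hsplit : ∑ x ∈ ι \ F, s x + ∑ x ∈ F, s x = ∑ x ∈ ι, s x :=
      Finset.sum_sdiff hFsub
    have h1 : (∑ x ∈ ι \ F, c x) * T ≤ ∑ x ∈ ι \ F, s x := by
      rw [Finset.sum_mul]
      apply Finset.sum_le_sum
      intro x _
      exact Nat.div_mul_le_self _ _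
    have h2 : ∑ x ∈ ι \ F, s x + T * k' ≤ T * n' := by omega
    have h3 : ((∑ x ∈ ι \ F, c x) + k') * T ≤ n' * T := by
      rw [add_mul]
      nlinarith
    exact Nat.le_of_mul_le_mul_right h3 hT
  have hctotsplit : ∀ F ∈ 𝔽, ∑ x ∈ ι \ F, c x + ∑ x ∈ F, c x = ctot := by
    intro F hF
    exact Finset.sum_sdiff (h𝔽 F hF).1
  -- disjointness of blocks
  have hBdisj : ∀ x ∈ ι, ∀ y ∈ ι, x ≠ y → Disjoint (B x) (B y) := by
    intro x hx y hy hxy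
    rw [Finset.disjoint_left]
    intro t htx hty
    simp only [hB, Finset.mem_Ico] at htx hty
    rcases lt_trichotomy (idx x) (idx y) with h | h | h
    · have := hpref_mono x hx y hy h; omega
    · exact hxy (idx_inj x hx y hy h)
    · have := hpref_mono y hy x hx h; omega
  have hBsub : ∀ x ∈ ι, B x ⊆ Finset.range ctot := by
    intro x hx t ht
    simp only [hB, Finset.mem_Ico] at ht
    have := hpref_le x hx
    exact Finset.mem_range.mpr (by omega)
  -- image in powersetCard
  have hmem : ∀ F ∈ 𝔽, Φ F ∈ (Finset.range n').powersetCard k' := by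
    intro F hF
    obtain ⟨hFsub, hFsum⟩ := h𝔽 F hF
    have hD := hcF F hF
    have hR := hrest F hF
    have hS := hctotsplit F hF
    rw [Finset.mem_powersetCard]
    constructor
    · intro t ht
      rcases Finset.mem_union.mp ht with ht | ht
      · obtain ⟨x, hxF, hxB⟩ := Finset.mem_biUnion.mp ht
        have := hBsub x (hFsub hxF) hxB
        rw [Finset.mem_range] at this ⊢
        omega
      · rw [Finset.mem_Ico] at ht
        rw [Finset.mem_range]
        omega
    · have hdisj2 : Disjoint (F.biUnion B) (Finset.Ico ctot (ctot + (k' - ∑ x ∈ F, c x))) := by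
        rw [Finset.disjoint_left]
        intro t ht ht2
        obtain ⟨x, hxF, hxB⟩ := Finset.mem_biUnion.mp ht
        have := Finset.mem_range.mp (hBsub x (hFsub hxF) hxB)
        rw [Finset.mem_Ico] at ht2
        omega
      rw [Finset.card_union_of_disjoint hdisj2, Nat.card_Ico,
        Finset.card_biUnion (fun x hx y hy hxy => hBdisj x (hFsub hx) y (hFsub hy) hxy)]
      have : ∀ x ∈ F, (B x).card = c x := by
        intro x _
        simp [hB, Nat.card_Ico]
      rw [Finset.sum_congr rfl this]
      have hkk : F.sum c = ∑ x ∈ F, c x := rfl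
      omega
  -- injectivity
  have key : ∀ F₁ ∈ 𝔽, ∀ F₂ ∈ 𝔽, Φ F₁ = Φ F₂ → F₁ ⊆ F₂ := by
    intro F₁ hF₁ F₂ hF₂ hΦeq x hx
    have hxι : x ∈ ι := (h𝔽 F₁ hF₁).1 hx
    have hpx : pref x ∈ Φ F₁ := by
      apply Finset.mem_union_left
      exact Finset.mem_biUnion.mpr ⟨x, hx, by
        simp only [hB, Finset.mem_Ico]
        have := hc1 x hxι
        omega⟩
    rw [hΦeq] at hpx
    have hplt : pref x < ctot := by
      have := hpref_le x hxι
      have := hc1 x hxι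
      omega
    rcases Finset.mem_union.mp hpx with hp | hp
    · obtain ⟨y, hyF, hyB⟩ := Finset.mem_biUnion.mp hp
      have hyι : y ∈ ι := (h𝔽 F₂ hF₂).1 hyF
      simp only [hB, Finset.mem_Ico] at hyB
      rcases lt_trichotomy (idx x) (idx y) with h | h | h
      · have := hpref_mono x hxι y hyι h
        have := hc1 x hxι
        omega
      · have : x = y := idx_inj x hxι y hyι h
        rwa [this]
      · have := hpref_mono y hyι x hxι h
        omega
    · rw [Finset.mem_Ico] at hp
      omega
  have hinj : Set.InjOn Φ 𝔽 := by
    intro F₁ hF₁ F₂ hF₂ hΦeq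
    exact Finset.Subset.antisymm (key F₁ hF₁ F₂ hF₂ hΦeq) (key F₂ hF₂ F₁ hF₁ hΦeq.symm)
  calc 𝔽.card ≤ ((Finset.range n').powersetCard k').card :=
        Finset.card_le_card_of_injOn Φ hmem hinj
    _ = n'.choose k' := by rw [Finset.card_powersetCard, Finset.card_range]
/-- A binary participation matrix `V` (rows = indicator vectors of user sets) satisfies the
multi-round privacy guarantee `T` if every nonzero linear combination `Vᵀ z` of its rows is of
the form `∑ i, a i • 1_{S i}` for pairwise disjoint sets `S i` of size at least `T` and
nonzero coefficients `a i`. -/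
def MultiRoundPrivacy {R N : ℕ} (V : Matrix (Fin R) (Fin N) ℝ) (T : ℕ) : Prop :=
  ∀ z : Fin R → ℝ, V.transpose.mulVec z ≠ 0 →
    ∃ (n : ℕ) (S : Fin n → Finset (Fin N)) (a : Fin n → ℝ),
      1 ≤ n ∧
      (∀ i j : Fin n, i ≠ j → Disjoint (S i) (S j)) ∧
      (∀ i, T ≤ (S i).card) ∧
      (∀ i, a i ≠ 0) ∧
      (∀ k : Fin N, V.transpose.mulVec z k = ∑ i, a i * (if k ∈ S i then 1 else 0))

/-- Converse (Remark 4 / Appendix C): any family of pairwise distinct `K`-subsets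
`𝒮_1, …, 𝒮_R` of `{1,…,N}` whose indicator matrix satisfies the multi-round privacy
guarantee `T` has at most `C(N/T, K/T)` sets, provided `T ∣ N`, `T ∣ K` and `K ≤ N/2`. -/
theorem batch_partitioning_optimal
    (N K T R : ℕ) (hN : 0 < N) (hK : 0 < K) (hT : 0 < T)
    (hTN : T ∣ N) (hTK : T ∣ K) (hKN : 2 * K ≤ N)
    (S : Fin R → Finset (Fin N)) (hSinj : Function.Injective S)
    (hScard : ∀ r, (S r).card = K)
    (V : Matrix (Fin R) (Fin N) ℝ)
    (hV : ∀ r j, V r j = if j ∈ S r then 1 else 0)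
    (hpriv : MultiRoundPrivacy V T) :
    R ≤ (N / T).choose (K / T) := by
  classical
  rcases Nat.eq_zero_or_pos R with rfl | hR
  · exact Nat.zero_le _
  -- the pattern (membership profile) of a user
  set pattern : Fin N → Finset (Fin R) := fun k => univ.filter (fun r => k ∈ S r) with hpat
  have hS_iff : ∀ (r : Fin R) (k : Fin N), k ∈ S r ↔ r ∈ pattern k := by
    intro r k; simp [hpat]
  -- the generic test vector
  set z : Fin R → ℝ := fun r => (2:ℝ) ^ (r : ℕ) with hz
  set val : Fin N → ℝ := V.transpose.mulVec z with hval
  have hmv : ∀ k, val k = ∑ r ∈ pattern k, (2:ℝ) ^ (r : ℕ) := by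
    intro k
    simp only [hval, Matrix.mulVec, dotProduct, Matrix.transpose_apply, hV, hz]
    rw [Finset.sum_filter]
    apply Finset.sum_congr rfl
    intro r _
    by_cases h : k ∈ S r <;> simp [h]
  have hval_inj : ∀ k k', val k = val k' → pattern k = pattern k' := by
    intro k k' h
    rw [hmv, hmv] at h
    exact sum_two_pow_inj_real _ _ h
  have hvalpos : ∀ k, (pattern k).Nonempty → 0 < val k := by
    intro k hne
    rw [hmv]
    exact Finset.sum_pos (fun r _ => pow_pos two_pos _) hne
  -- nonzero
  have hz0 : V.transpose.mulVec z ≠ 0 := by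
    intro h0
    obtain ⟨k0, hk0⟩ := Finset.card_pos.mp (by rw [hScard ⟨0, hR⟩]; exact hK)
    have hne : (pattern k0).Nonempty := ⟨⟨0, hR⟩, (hS_iff _ _).mp hk0⟩
    have := hvalpos k0 hne
    rw [hval, h0] at this
    exact lt_irrefl _ this
  obtain ⟨n, S', a, hn, hdisj, hcard', ha, heq⟩ := hpriv z hz0
  have heq' : ∀ k, val k = ∑ i, a i * (if k ∈ S' i then 1 else 0) := heq
  have hval_a : ∀ i (k : Fin N), k ∈ S' i → val k = a i := by
    intro i k hk
    rw [heq' k]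
    rw [Fintype.sum_eq_single i]
    · simp [hk]
    · intro j hj
      have : k ∉ S' j := by
        have hd := hdisj j i hj
        exact fun hkj => (Finset.disjoint_left.mp hd hkj) hk
      simp [this]
  -- every nonempty atom has size ≥ T
  have atom_ge : ∀ k, (pattern k).Nonempty →
      T ≤ (univ.filter fun k' => pattern k' = pattern k).card := by
    intro k hne
    have hvk : val k ≠ 0 := ne_of_gt (hvalpos k hne)
    have hex : ∃ i, k ∈ S' i := by
      by_contra hcon
      push_neg at hcon
      apply hvk
      rw [heq' k]
      apply Finset.sum_eq_zero
      intro i _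
      simp [hcon i]
    obtain ⟨i0, hi0⟩ := hex
    have hsub : S' i0 ⊆ univ.filter fun k' => pattern k' = pattern k := by
      intro k' hk'
      rw [Finset.mem_filter]
      refine ⟨Finset.mem_univ _, ?_⟩
      apply hval_inj
      rw [hval_a i0 k' hk', hval_a i0 k hi0]
    exact le_trans (hcard' i0) (Finset.card_le_card hsub)
  -- set up the counting
  set ι : Finset (Finset (Fin R)) := (univ.image pattern).erase ∅ with hι
  set sz : Finset (Fin R) → ℕ := fun p => (univ.filter fun k => pattern k = p).card with hsz
  have hs : ∀ p ∈ ι, T ≤ sz p := by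
    intro p hp
    obtain ⟨hpne, hpim⟩ := Finset.mem_erase.mp hp
    obtain ⟨k, _, rfl⟩ := Finset.mem_image.mp hpim
    exact atom_ge k (Finset.nonempty_iff_ne_empty.mpr hpne)
  have hssum : ∑ p ∈ ι, sz p ≤ N := by
    have h1 : (univ : Finset (Fin N)).card =
        ∑ p ∈ univ.image pattern, (univ.filter fun k => pattern k = p).card :=
      Finset.card_eq_sum_card_fiberwise (fun k _ => Finset.mem_image_of_mem pattern (mem_univ k))
    calc ∑ p ∈ ι, sz p ≤ ∑ p ∈ univ.image pattern, sz p :=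
          Finset.sum_le_sum_of_subset (Finset.erase_subset _ _)
      _ = N := by rw [← h1]; simp
  set F : Fin R → Finset (Finset (Fin R)) := fun r => ι.filter (fun p => r ∈ p) with hF
  have hpat_mem : ∀ (r : Fin R) (k : Fin N), k ∈ S r → pattern k ∈ F r := by
    intro r k hk
    have hr : r ∈ pattern k := (hS_iff r k).mp hk
    refine Finset.mem_filter.mpr ⟨Finset.mem_erase.mpr ⟨?_, Finset.mem_image_of_mem pattern (mem_univ k)⟩, hr⟩
    exact Finset.ne_empty_of_mem hr
  have hFsum : ∀ r, ∑ p ∈ F r, sz p = K := by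
    intro r
    have h1 : (S r).card = ∑ p ∈ F r, ((S r).filter fun k => pattern k = p).card :=
      Finset.card_eq_sum_card_fiberwise (fun k hk => hpat_mem r k hk)
    have h2 : ∀ p ∈ F r, ((S r).filter fun k => pattern k = p) =
        (univ.filter fun k => pattern k = p) := by
      intro p hp
      obtain ⟨hpι, hrp⟩ := Finset.mem_filter.mp hp
      ext k
      simp only [Finset.mem_filter, Finset.mem_univ, true_and, and_iff_right_iff_imp]
      intro hpk
      exact (hS_iff r k).mpr (hpk ▸ hrp)
    rw [← hScard r, h1]
    exact Finset.sum_congr rfl (fun p hp => by rw [h2 p hp])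
  have hFinj : Function.Injective F := by
    intro r1 r2 h12
    apply hSinj
    ext k
    constructor
    · intro hk
      have := hpat_mem r1 k hk
      rw [h12] at this
      exact (hS_iff r2 k).mpr (Finset.mem_filter.mp this).2
    · intro hk
      have := hpat_mem r2 k hk
      rw [← h12] at this
      exact (hS_iff r1 k).mpr (Finset.mem_filter.mp this).2
  set 𝔽 : Finset (Finset (Finset (Fin R))) := univ.image F with h𝔽def
  have hcard𝔽 : 𝔽.card = R := by
    rw [h𝔽def, Finset.card_image_of_injective _ hFinj, Finset.card_univ, Fintype.card_fin]
  have h𝔽 : ∀ G ∈ 𝔽, G ⊆ ι ∧ ∑ p ∈ G, sz p = K := by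
    intro G hG
    obtain ⟨r, _, rfl⟩ := Finset.mem_image.mp hG
    exact ⟨Finset.filter_subset _ _, hFsum r⟩
  calc R = 𝔽.card := hcard𝔽.symm
    _ ≤ (N / T).choose (K / T) := counting_lemma T N K hT hTN hTK ι sz hs hssum 𝔽 h𝔽
end

section
/- Let V ∈ {0,1}^{R×N} be a binary matrix satisfying the multi-round privacy guarantee T. Then for every column index j ∈ {1,…,N} whose column v_j ∈ {0,1}^R is nonzero, the number of column indices j' ∈ {1,…,N} with column v_{j'} equal to v_j is at least T. -/
open Matrix Finset

open scoped Classical in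
/-- Structural step of the converse proof (Appendix C): in any binary matrix `V` satisfying
the multi-round privacy guarantee `T`, every nonzero column is repeated at least `T` times,
i.e., at least `T` column indices carry exactly the same column vector. -/
theorem privacy_forces_batches
    (R N T : ℕ) (V : Matrix (Fin R) (Fin N) ℝ)
    (hbin : ∀ r j, V r j = 0 ∨ V r j = 1)
    (hpriv : MultiRoundPrivacy V T) :
    ∀ j : Fin N, (fun r => V r j) ≠ 0 →
      T ≤ (Finset.univ.filter (fun j' : Fin N => ∀ r, V r j' = V r j)).card := by
  intro j hj
  -- the "support" of each column, as a Finset ℕ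
  set b : Fin N → Finset ℕ := fun k => (univ.filter (fun r : Fin R => V r k = 1)).image Fin.val
    with hb
  set z : Fin R → ℝ := fun r => (2 : ℝ) ^ (r : ℕ) with hz
  -- compute Vᵀ z
  have hval : ∀ k, V.transpose.mulVec z k = ((∑ m ∈ b k, 2 ^ m : ℕ) : ℝ) := by
    intro k
    rw [hb]
    rw [Finset.sum_image (by intro x _ y _ h; exact Fin.val_injective h)]
    simp only [mulVec, dotProduct, transpose_apply, Nat.cast_sum]
    rw [← Finset.sum_filter_add_sum_filter_not univ (fun r : Fin R => V r k = 1)]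
    have h2 : ∑ r ∈ univ.filter (fun r : Fin R => ¬ V r k = 1), V r k * z r = 0 := by
      apply Finset.sum_eq_zero
      intro r hr
      simp only [mem_filter] at hr
      rcases hbin r k with h | h
      · rw [h, zero_mul]
      · exact absurd h hr.2
    rw [h2, add_zero]
    apply Finset.sum_congr rfl
    intro r hr
    simp only [mem_filter] at hr
    rw [hr.2, one_mul]
    push_cast
    rfl
  -- columns equal iff b equal
  have hcol : ∀ k k' : Fin N, b k = b k' → ∀ r, V r k = V r k' := by
    intro k k' h r
    have : ((r:ℕ) ∈ b k) = ((r:ℕ) ∈ b k') := by rw [h]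
    simp only [hb, Finset.mem_image, mem_filter, mem_univ, true_and] at this
    have hiff : V r k = 1 ↔ V r k' = 1 := by
      constructor
      · intro h1
        have : ∃ r' : Fin R, V r' k' = 1 ∧ (r' : ℕ) = (r : ℕ) := by
          rw [← this]; exact ⟨r, h1, rfl⟩
        obtain ⟨r', h1', h2'⟩ := this
        rwa [Fin.val_injective h2'] at h1'
      · intro h1
        have : ∃ r' : Fin R, V r' k = 1 ∧ (r' : ℕ) = (r : ℕ) := by
          rw [this]; exact ⟨r, h1, rfl⟩
        obtain ⟨r', h1', h2'⟩ := this
        rwa [Fin.val_injective h2'] at h1'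
    rcases hbin r k with h1 | h1 <;> rcases hbin r k' with h2 | h2 <;>
      simp_all
  -- Vᵀ z is nonzero: at j it is positive
  have hbj : (b j).Nonempty := by
    by_contra hne
    apply hj
    funext r
    rcases hbin r j with h | h
    · exact h
    · exfalso; exact hne ⟨(r : ℕ), by simp [hb, Finset.mem_image]; exact ⟨r, h, rfl⟩⟩
  have hjpos : 0 < V.transpose.mulVec z j := by
    rw [hval]
    have : 0 < ∑ m ∈ b j, 2 ^ m :=
      Finset.sum_pos (fun m _ => Nat.pow_pos (by norm_num)) hbj
    exact_mod_cast this
  have hnz : V.transpose.mulVec z ≠ 0 := by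
    intro h
    rw [h] at hjpos
    exact lt_irrefl 0 hjpos
  obtain ⟨n, S, a, hn, hdisj, hcard, hanz, hrep⟩ := hpriv z hnz
  -- j belongs to exactly one S i₀
  have hjmem : ∃ i₀, j ∈ S i₀ := by
    by_contra h
    push_neg at h
    have := hrep j
    rw [Finset.sum_eq_zero (fun i _ => by simp [h i])] at this
    rw [this] at hjpos; exact lt_irrefl 0 hjpos
  obtain ⟨i₀, hi₀⟩ := hjmem
  -- value at any k ∈ S i₀ equals a i₀
  have hvalmem : ∀ k, k ∈ S i₀ → V.transpose.mulVec z k = a i₀ := by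
    intro k hk
    rw [hrep k, Finset.sum_eq_single i₀]
    · simp [hk]
    · intro i _ hi
      have : k ∉ S i := fun hki =>
        (Finset.disjoint_left.mp (hdisj i i₀ hi) hki) hk
      simp [this]
    · simp
  -- every k ∈ S i₀ has same column as j
  have hsub : S i₀ ⊆ Finset.univ.filter (fun j' : Fin N => ∀ r, V r j' = V r j) := by
    intro k hk
    simp only [mem_filter, mem_univ, true_and]
    have hkv : V.transpose.mulVec z k = V.transpose.mulVec z j := by
      rw [hvalmem k hk, hvalmem j hi₀]
    rw [hval, hval] at hkv
    have : (∑ m ∈ b k, 2 ^ m : ℕ) = ∑ m ∈ b j, 2 ^ m := by exact_mod_cast hkv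
    exact hcol k j (Finset.geomSum_injective le_rfl this)
  calc T ≤ (S i₀).card := hcard i₀
    _ ≤ _ := Finset.card_le_card hsub
end
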